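/- Let A and B be N×N complex matrices with ‖A‖ < 1 (operator norm), A A† = A† A, B positive semidefinite nonzero with tr(B) = 1, and let 0 < ε < 1. If A ≠ 0, set T* = ⌈ln(1/ε) / (2 ln(1/‖A‖))⌉, and set T* = 0 if A = 0. Then for every integer T ≥ T*, the normalized truncated series satisfies (1/2)·‖ (∑_{k=0}^{T} A^k B (A†)^k) / tr(∑_{k=0}^{T} A^k B (A†)^k) − X/tr(X) ‖₁ ≤ ε, where X = ∑_{k=0}^{∞} A^k B (A†)^k is the solution of the discrete-time Lyapunov equation A X A† − X + B = 0. -/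

import Mathlib

open scoped Matrix.Norms.L2Operator ComplexOrder
open Matrix

/-- The positive semidefinite square root of a positive semidefinite matrix
(the definition `Matrix.PosSemidef.sqrt` of the older Mathlib, removed since). -/
noncomputable def Matrix.PosSemidef.sqrt {n 𝕜 : Type*} [Fintype n] [RCLike 𝕜] [DecidableEq n]
    {A : Matrix n n 𝕜} (hA : Matrix.PosSemidef A) : Matrix n n 𝕜 :=
  hA.1.eigenvectorUnitary.1 * diagonal ((↑) ∘ (√·) ∘ hA.1.eigenvalues) *
  (star hA.1.eigenvectorUnitary : Matrix n n 𝕜)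

/-- The trace norm (sum of singular values) of a square complex matrix,
realized as `tr √(Mᴴ M)`. -/
noncomputable def traceNorm {n : ℕ} (M : Matrix (Fin n) (Fin n) ℂ) : ℝ :=
  ((Matrix.posSemidef_conjTranspose_mul_self M).sqrt.trace).re

section SqrtAux
open scoped MatrixOrder
variable {n : ℕ}

lemma Matrix.PosSemidef.sqrt_eq_cfcSqrt {C : Matrix (Fin n) (Fin n) ℂ} (hC : C.PosSemidef) :
    hC.sqrt = CFC.sqrt C := by
  rw [CFC.sqrt_eq_real_sqrt C hC.nonneg, cfcₙ_eq_cfc, hC.1.cfc_eq]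
  rfl

lemma Matrix.PosSemidef.sqrt_mul_self {C : Matrix (Fin n) (Fin n) ℂ} (hC : C.PosSemidef) :
    hC.sqrt * hC.sqrt = C := by
  rw [hC.sqrt_eq_cfcSqrt]; exact CFC.sqrt_mul_sqrt_self C hC.nonneg

lemma Matrix.PosSemidef.posSemidef_sqrt {C : Matrix (Fin n) (Fin n) ℂ} (hC : C.PosSemidef) :
    hC.sqrt.PosSemidef := by
  rw [hC.sqrt_eq_cfcSqrt]; exact (CFC.sqrt_nonneg C).posSemidef

lemma Matrix.PosSemidef.eq_sqrt_of_sq_eq {N C : Matrix (Fin n) (Fin n) ℂ} (hN : N.PosSemidef)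
    (hC : C.PosSemidef) (h : N ^ 2 = C) : N = hC.sqrt := by
  rw [hC.sqrt_eq_cfcSqrt]
  exact (CFC.sqrt_unique (by rw [← h, pow_two]) hN.nonneg).symm

end SqrtAux

namespace LyapAux
variable {n : ℕ}

lemma traceNorm_hermitian (H : Matrix (Fin n) (Fin n) ℂ) (hH : H.IsHermitian) :
    traceNorm H = ∑ i, |hH.eigenvalues i| := by
  set V : Matrix (Fin n) (Fin n) ℂ := (hH.eigenvectorUnitary : Matrix (Fin n) (Fin n) ℂ) with hV
  have hVsV : (star V) * V = 1 := Unitary.coe_star_mul_self hH.eigenvectorUnitary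
  have key : ∀ D₁ D₂ : Matrix (Fin n) (Fin n) ℂ,
      (V * D₁ * star V) * (V * D₂ * star V) = V * (D₁ * D₂) * star V := fun D₁ D₂ => by
    simp only [mul_assoc]
    rw [← mul_assoc (star V) V (D₂ * star V), hVsV, one_mul]
  set N : Matrix (Fin n) (Fin n) ℂ :=
    V * diagonal (RCLike.ofReal ∘ fun i => |hH.eigenvalues i|) * (star V) with hNdef
  have hNpsd : N.PosSemidef := by
    rw [hNdef, Matrix.star_eq_conjTranspose]
    refine Matrix.PosSemidef.mul_mul_conjTranspose_same ?_ V
    refine Matrix.posSemidef_diagonal_iff.mpr fun i => ?_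
    simp only [Function.comp_apply]
    rw [← RCLike.ofReal_zero]
    exact RCLike.ofReal_le_ofReal.mpr (abs_nonneg _)
  have hsq : N ^ 2 = Hᴴ * H := by
    rw [hH.eq, hNdef, pow_two, key]
    conv_rhs => rw [hH.spectral_theorem, Unitary.conjStarAlgAut_apply, ← hV]
    rw [key, diagonal_mul_diagonal, diagonal_mul_diagonal]
    congr 2
    funext i
    simp only [Function.comp_apply, ← RCLike.ofReal_mul, abs_mul_abs_self]
  have hNsqrt : N = (Matrix.posSemidef_conjTranspose_mul_self H).sqrt :=
    hNpsd.eq_sqrt_of_sq_eq _ hsq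
  rw [traceNorm, ← hNsqrt, hNdef, Matrix.trace_mul_cycle, hVsV, one_mul, Matrix.trace_diagonal]
  simp

lemma re_trace_eq_sum (M : Matrix (Fin n) (Fin n) ℂ) :
    M.trace.re = ∑ i, (M i i).re := by
  rw [Matrix.trace, Complex.re_sum]
  rfl

lemma diag_re_nonneg {M : Matrix (Fin n) (Fin n) ℂ} (hM : M.PosSemidef) (i : Fin n) :
    0 ≤ (M i i).re ∧ (M i i).im = 0 := by
  have h := hM.dotProduct_mulVec_nonneg (Pi.single i 1)
  have h2 : dotProduct (star (Pi.single i 1)) (M *ᵥ Pi.single i 1) = M i i := by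
    simp [Matrix.mulVec_single, dotProduct, Pi.single_apply, apply_ite]
  rw [h2] at h
  exact ⟨(Complex.le_def.mp h).1, ((Complex.le_def.mp h).2).symm⟩

lemma trace_re_nonneg {M : Matrix (Fin n) (Fin n) ℂ} (hM : M.PosSemidef) :
    0 ≤ M.trace.re := by
  rw [re_trace_eq_sum]
  exact Finset.sum_nonneg fun i _ => (diag_re_nonneg hM i).1

lemma trace_eq_re {M : Matrix (Fin n) (Fin n) ℂ} (hM : M.PosSemidef) :
    M.trace = (M.trace.re : ℂ) := by
  have him : M.trace.im = 0 := by
    rw [Matrix.trace, Complex.im_sum]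
    exact Finset.sum_eq_zero fun i _ => (diag_re_nonneg hM i).2
  exact Complex.ext (by simp) (by simp [him])

lemma traceNorm_sub_le (P Q : Matrix (Fin n) (Fin n) ℂ)
    (hP : P.PosSemidef) (hQ : Q.PosSemidef) :
    traceNorm (P - Q) ≤ P.trace.re + Q.trace.re := by
  have hH : (P - Q).IsHermitian := hP.1.sub hQ.1
  rw [traceNorm_hermitian _ hH]
  set V : Matrix (Fin n) (Fin n) ℂ := (hH.eigenvectorUnitary : Matrix (Fin n) (Fin n) ℂ) with hV
  have hVVs : V * (star V) = 1 := Unitary.coe_mul_star_self hH.eigenvectorUnitary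
  have hdiag : (star V) * (P - Q) * V = diagonal (RCLike.ofReal ∘ hH.eigenvalues) :=
    by
      conv_lhs => rw [hH.spectral_theorem, Unitary.conjStarAlgAut_apply, ← hV]
      have hVsV : (star V) * V = 1 := Unitary.coe_star_mul_self hH.eigenvectorUnitary
      simp only [← mul_assoc, hVsV, one_mul]; rw [mul_assoc, hVsV, mul_one]
  have hPps : ((star V) * P * V).PosSemidef := by
    rw [Matrix.star_eq_conjTranspose]; exact hP.conjTranspose_mul_mul_same V
  have hQps : ((star V) * Q * V).PosSemidef := by
    rw [Matrix.star_eq_conjTranspose]; exact hQ.conjTranspose_mul_mul_same V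
  have heig : ∀ i, hH.eigenvalues i
      = ((star V * P * V) i i).re - ((star V * Q * V) i i).re := by
    intro i
    have : (star V * (P - Q) * V) i i = (star V * P * V) i i - (star V * Q * V) i i := by
      rw [mul_sub, sub_mul]
      rfl
    rw [hdiag] at this
    simpa using congrArg Complex.re this
  have hb : ∀ i, |hH.eigenvalues i| ≤ ((star V * P * V) i i).re + ((star V * Q * V) i i).re := by
    intro i
    rw [heig i]
    exact (abs_sub _ _).trans (by
      rw [abs_of_nonneg (diag_re_nonneg hPps i).1, abs_of_nonneg (diag_re_nonneg hQps i).1])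
  calc ∑ i, |hH.eigenvalues i|
      ≤ ∑ i, (((star V * P * V) i i).re + ((star V * Q * V) i i).re) :=
        Finset.sum_le_sum fun i _ => hb i
    _ = (star V * P * V).trace.re + (star V * Q * V).trace.re := by
        rw [Finset.sum_add_distrib, re_trace_eq_sum, re_trace_eq_sum]
    _ = P.trace.re + Q.trace.re := by
        rw [Matrix.trace_mul_cycle (star V) P V, Matrix.trace_mul_cycle (star V) Q V,
          hVVs, one_mul, one_mul]

end LyapAux

section HasSumStuff
variable {n : ℕ}

/-- entry extraction -/
lemma hasSum_entry {f : ℕ → Matrix (Fin n) (Fin n) ℂ} {X : Matrix (Fin n) (Fin n) ℂ}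
    (h : HasSum f X) (i j : Fin n) : HasSum (fun k => f k i j) (X i j) :=
  h.map (AddMonoidHom.mk' (fun M : Matrix (Fin n) (Fin n) ℂ => M i j) (fun _ _ => rfl))
    (continuous_id.matrix_elem i j)

lemma hasSum_trace {f : ℕ → Matrix (Fin n) (Fin n) ℂ} {X : Matrix (Fin n) (Fin n) ℂ}
    (h : HasSum f X) : HasSum (fun k => (f k).trace) X.trace :=
  h.map (Matrix.traceAddMonoidHom (Fin n) ℂ) continuous_id.matrix_trace

lemma hasSum_quad {f : ℕ → Matrix (Fin n) (Fin n) ℂ} {X : Matrix (Fin n) (Fin n) ℂ}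
    (h : HasSum f X) (y : Fin n → ℂ) :
    HasSum (fun k => dotProduct (star y) ((f k) *ᵥ y))
      (dotProduct (star y) (X *ᵥ y)) :=
  h.map (AddMonoidHom.mk' (fun M : Matrix (Fin n) (Fin n) ℂ => dotProduct (star y) (M *ᵥ y))
      (fun M N => by simp [Matrix.add_mulVec, dotProduct_add]))
    (continuous_const.dotProduct (continuous_id.matrix_mulVec continuous_const))

lemma posSemidef_of_hasSum {f : ℕ → Matrix (Fin n) (Fin n) ℂ} {R : Matrix (Fin n) (Fin n) ℂ}
    (hf : ∀ k, (f k).PosSemidef) (h : HasSum f R) : R.PosSemidef := by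
  rw [Matrix.posSemidef_iff_dotProduct_mulVec]
  constructor
  · have h2 := h.matrix_conjTranspose
    simp_rw [fun k => (hf k).1.eq] at h2
    exact h2.unique h
  · intro y
    have hq := hasSum_quad h y
    have hterm := fun k => (hf k).dotProduct_mulVec_nonneg y
    rw [Complex.le_def]
    constructor
    · have hre := Complex.hasSum_re hq
      simpa using hasSum_le (fun k => (Complex.le_def.mp (hterm k)).1) hasSum_zero hre
    · have him := Complex.hasSum_im hq
      have : HasSum (fun _ : ℕ => (0:ℝ)) (dotProduct (star y) (R *ᵥ y)).im := by
        convert him using 1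
        funext k
        exact (Complex.le_def.mp (hterm k)).2
      simpa using (this.unique hasSum_zero).symm

end HasSumStuff

section KeyBound
variable {n : ℕ}

lemma re_trace_mul_conjTranspose (N : Matrix (Fin n) (Fin n) ℂ) :
    (N * Nᴴ).trace.re = ∑ i, ∑ j, ‖N j i‖^2 := by
  rw [LyapAux.re_trace_eq_sum]
  rw [Finset.sum_comm]
  congr 1; funext j
  rw [Matrix.mul_apply, Complex.re_sum]
  congr 1; funext i
  rw [Matrix.conjTranspose_apply]
  simp only [Complex.star_def, Complex.mul_conj, Complex.normSq_eq_norm_sq,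
    ← Complex.ofReal_pow, Complex.ofReal_re]

lemma key_trace_le (M C : Matrix (Fin n) (Fin n) ℂ) (hC : C.PosSemidef) :
    (M * C * Mᴴ).trace.re ≤ ‖M‖^2 * C.trace.re := by
  set L := hC.sqrt with hLdef
  have hL : L * L = C := hC.sqrt_mul_self
  have hLH : Lᴴ = L := hC.posSemidef_sqrt.1
  have h1 : M * C * Mᴴ = (M * L) * (M * L)ᴴ := by
    rw [Matrix.conjTranspose_mul, hLH, ← hL]
    noncomm_ring
  have h2 : C.trace.re = (L * Lᴴ).trace.re := by rw [hLH, hL]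
  rw [h1, h2, re_trace_mul_conjTranspose, re_trace_mul_conjTranspose]
  rw [Finset.mul_sum]
  refine Finset.sum_le_sum fun i _ => ?_
  have hnorm : ∀ x : EuclideanSpace ℂ (Fin n), ‖x‖^2 = ∑ j, ‖x j‖^2 := fun x => by
    rw [EuclideanSpace.norm_eq, Real.sq_sqrt (Finset.sum_nonneg fun j _ => by positivity)]
  set x : EuclideanSpace ℂ (Fin n) := (WithLp.equiv 2 (Fin n → ℂ)).symm (fun j => L j i) with hx
  have hcol : ∀ j, (M * L) j i = (M *ᵥ (fun k => L k i)) j := fun j => rfl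
  calc ∑ j, ‖(M * L) j i‖^2
      = ‖(WithLp.equiv 2 (Fin n → ℂ)).symm (M *ᵥ (fun k => L k i))‖ ^ 2 := by
        rw [hnorm]; rfl
    _ ≤ (‖M‖ * ‖x‖)^2 := by
        have := Matrix.l2_opNorm_mulVec M x
        have h0 : (0:ℝ) ≤ ‖(WithLp.equiv 2 (Fin n → ℂ)).symm (M *ᵥ (fun k => L k i))‖ :=
          norm_nonneg _
        exact pow_le_pow_left₀ h0 this 2
    _ = ‖M‖^2 * ∑ j, ‖L j i‖^2 := by rw [mul_pow, hnorm]; rfl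

end KeyBound

lemma shift_eq {n : ℕ} (A B : Matrix (Fin n) (Fin n) ℂ) (k m : ℕ) :
    A ^ (k + m) * B * Aᴴ ^ (k + m) = A ^ m * (A ^ k * B * Aᴴ ^ k) * (A ^ m)ᴴ := by
  rw [Matrix.conjTranspose_pow, pow_add, pow_add, pow_mul_comm]
  simp only [Matrix.mul_assoc]

lemma posSemidef_ofReal_smul {n : ℕ} {c : ℝ} (hc : 0 ≤ c) {M : Matrix (Fin n) (Fin n) ℂ}
    (hM : M.PosSemidef) : ((c:ℂ) • M).PosSemidef := by
  rw [Matrix.posSemidef_iff_dotProduct_mulVec]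
  constructor
  · rw [Matrix.IsHermitian, Matrix.conjTranspose_smul, hM.1.eq]
    congr 1
    simp [Complex.star_def, Complex.conj_ofReal]
  · intro y
    rw [Matrix.smul_mulVec, dotProduct_smul, smul_eq_mul]
    have h0 : (0:ℂ) ≤ (c:ℂ) := by exact_mod_cast hc
    exact mul_nonneg h0 (hM.dotProduct_mulVec_nonneg y)


/-- Theorem 1: solution of the discrete-time Lyapunov equation. -/
theorem discrete_lyapunov_approx {n : ℕ} (A B X : Matrix (Fin n) (Fin n) ℂ)
    (hA : ‖A‖ < 1) (hnormal : A * Aᴴ = Aᴴ * A)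
    (hB : B.PosSemidef) (hB0 : B ≠ 0) (hBtr : B.trace = 1)
    (ε : ℝ) (hε0 : 0 < ε) (hε1 : ε < 1)
    (hX : HasSum (fun k : ℕ => A ^ k * B * Aᴴ ^ k) X)
    (T : ℕ)
    (hT : (if A = 0 then 0 else ⌈Real.log (1/ε) / (2 * Real.log (1/‖A‖))⌉₊) ≤ T) :
    (1/2) * traceNorm
      ((∑ k ∈ Finset.range (T+1), A ^ k * B * Aᴴ ^ k).trace⁻¹ •
          (∑ k ∈ Finset.range (T+1), A ^ k * B * Aᴴ ^ k) -
        X.trace⁻¹ • X) ≤ ε := by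
  classical
  set f : ℕ → Matrix (Fin n) (Fin n) ℂ := fun k => A ^ k * B * Aᴴ ^ k with hfdef
  have hfpsd : ∀ k, (f k).PosSemidef := fun k => by
    have := hB.mul_mul_conjTranspose_same (A ^ k)
    simpa [hfdef, Matrix.conjTranspose_pow] using this
  set m := T + 1 with hm
  set S : Matrix (Fin n) (Fin n) ℂ := ∑ k ∈ Finset.range m, f k with hSdef
  have hSpsd : S.PosSemidef := by
    rw [hSdef]
    exact Finset.sum_induction f _ (fun a b ha hb => ha.add hb) Matrix.PosSemidef.zero
      (fun k _ => hfpsd k)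
  have hXpsd : X.PosSemidef := posSemidef_of_hasSum hfpsd hX
  have hRsum : HasSum (fun k => f (k + m)) (X - S) := by
    rw [hasSum_nat_add_iff m]
    simpa [hSdef] using hX
  have hRpsd : (X - S).PosSemidef := posSemidef_of_hasSum (fun k => hfpsd _) hRsum
  set s := S.trace.re with hs
  set x := X.trace.re with hxd
  set r := (X - S).trace.re with hrd
  have hr0 : 0 ≤ r := LyapAux.trace_re_nonneg hRpsd
  have hs1 : 1 ≤ s := by
    have hsum : s = ∑ k ∈ Finset.range m, (f k).trace.re := by
      rw [hs, hSdef, Matrix.trace_sum, Complex.re_sum]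
    have h0 : (f 0).trace.re = 1 := by simp [hfdef, hBtr]
    rw [hsum]
    calc (1:ℝ) = (f 0).trace.re := h0.symm
      _ ≤ ∑ k ∈ Finset.range m, (f k).trace.re :=
        Finset.single_le_sum (fun k _ => LyapAux.trace_re_nonneg (hfpsd k))
          (Finset.mem_range.mpr (Nat.succ_pos T))
  have hx_eq : x = s + r := by
    have h1 : X.trace = S.trace + (X - S).trace := by rw [← Matrix.trace_add, add_sub_cancel]
    rw [hxd, h1, Complex.add_re]
  have hs0 : (0:ℝ) < s := lt_of_lt_of_le one_pos hs1
  have hx0 : (0:ℝ) < x := by linarith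
  -- key inequality
  set M₀ := A ^ m with hM₀
  have hshift : ∀ k, f (k + m) = M₀ * f k * M₀ᴴ := fun k => shift_eq A B k m
  have hkey : ∀ k, (f (k + m)).trace.re ≤ ‖M₀‖^2 * (f k).trace.re := fun k => by
    rw [hshift k]; exact key_trace_le M₀ (f k) (hfpsd k)
  have hXtr2 : HasSum (fun k => (f k).trace.re) x := Complex.hasSum_re (hasSum_trace hX)
  have hRtr2 : HasSum (fun k => (f (k + m)).trace.re) r := Complex.hasSum_re (hasSum_trace hRsum)
  have hrx : r ≤ ‖M₀‖^2 * x := hasSum_le hkey hRtr2 (hXtr2.mul_left _)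
  have hMn : ‖M₀‖^2 ≤ (‖A‖^m)^2 :=
    pow_le_pow_left₀ (norm_nonneg _) (norm_pow_le' A (Nat.succ_pos T)) 2
  have hε' : (‖A‖^m)^2 ≤ ε := by
    rw [← pow_mul]
    by_cases hA0' : A = 0
    · rw [hA0', norm_zero, zero_pow (by omega)]
      exact le_of_lt hε0
    · have ha1 : 0 < ‖A‖ := norm_pos_iff.mpr hA0'
      have hla : Real.log ‖A‖ < 0 := Real.log_neg ha1 hA
      rw [if_neg hA0'] at hT
      have hTceil : Real.log (1/ε) / (2 * Real.log (1/‖A‖)) ≤ (T:ℝ) :=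
        (Nat.le_ceil _).trans (Nat.cast_le.mpr hT)
      rw [one_div, one_div, Real.log_inv, Real.log_inv] at hTceil
      have hd : -Real.log ε ≤ (T:ℝ) * (2 * -Real.log ‖A‖) :=
        (div_le_iff₀ (by linarith)).mp hTceil
      calc ‖A‖^(m*2) = Real.exp (Real.log (‖A‖^(m*2))) :=
            (Real.exp_log (pow_pos ha1 _)).symm
        _ = Real.exp (((m*2 : ℕ):ℝ) * Real.log ‖A‖) := by rw [Real.log_pow]
        _ ≤ Real.exp (Real.log ε) := by
            apply Real.exp_le_exp.mpr
            have hcast : ((m*2 : ℕ):ℝ) = (T:ℝ)*2 + 2 := by rw [hm]; push_cast; ring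
            rw [hcast]
            nlinarith [hla, hd]
        _ = ε := Real.exp_log hε0
  -- final assembly
  show (1/2) * traceNorm (S.trace⁻¹ • S - X.trace⁻¹ • X) ≤ ε
  rw [LyapAux.trace_eq_re hSpsd, LyapAux.trace_eq_re hXpsd, ← hs, ← hxd]
  set P := ((r/(s*x) : ℝ) : ℂ) • S with hP
  set Q := ((x⁻¹ : ℝ) : ℂ) • (X - S) with hQd
  have hcoefR : (s:ℝ)⁻¹ = r/(s*x) + x⁻¹ := by
    field_simp
    rw [hx_eq]; ring
  have hPQ : ((s:ℝ):ℂ)⁻¹ • S - ((x:ℝ):ℂ)⁻¹ • X = P - Q := by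
    have hcoef : ((s:ℂ))⁻¹ = ((r/(s*x) : ℝ) : ℂ) + ((x⁻¹:ℝ):ℂ) := by
      rw [← Complex.ofReal_add, ← hcoefR, Complex.ofReal_inv]
    rw [hP, hQd, hcoef]
    have hxinv : ((x:ℝ):ℂ)⁻¹ = ((x⁻¹:ℝ):ℂ) := by rw [Complex.ofReal_inv]
    rw [hxinv]
    module
  rw [hPQ]
  have hPps : P.PosSemidef := posSemidef_ofReal_smul (by positivity) hSpsd
  have hQps : Q.PosSemidef := posSemidef_ofReal_smul (by positivity) hRpsd
  have hbound := LyapAux.traceNorm_sub_le P Q hPps hQps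
  have hPtr : P.trace.re = (r/(s*x)) * s := by
    rw [hP, Matrix.trace_smul, smul_eq_mul, LyapAux.trace_eq_re hSpsd, ← hs,
      ← Complex.ofReal_mul, Complex.ofReal_re]
  have hQtr : Q.trace.re = x⁻¹ * r := by
    rw [hQd, Matrix.trace_smul, smul_eq_mul, LyapAux.trace_eq_re hRpsd, ← hrd,
      ← Complex.ofReal_mul, Complex.ofReal_re]
  have hsum2 : P.trace.re + Q.trace.re = 2 * (r / x) := by
    rw [hPtr, hQtr]
    field_simp
    ring
  calc (1/2) * traceNorm (P - Q) ≤ (1/2) * (2 * (r/x)) := by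
        rw [← hsum2]; linarith [hbound]
    _ = r / x := by ring
    _ ≤ (‖M₀‖^2 * x) / x := by gcongr
    _ = ‖M₀‖^2 := by field_simp
    _ ≤ ε := hMn.trans hε'
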